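/- arXiv:2010.10157 — 2 statements merged into one kernel-verified Lean document; each statement's English description precedes it below -/
import Mathlib

section
/- For every real number ρ, one has (ρ²/12)·φ(ρ) + Φ₁(ρ)² = Φ₁(2ρ), where φ(ρ) = 4Φ₂(ρ)Φ₁(2ρ) − 3Φ₁(ρ)⁴. -/
noncomputable def Phi1 (ρ : ℝ) : ℝ :=
  if ρ = 0 then 1 else (1 - Real.exp (-ρ)) / ρ

noncomputable def Phi2 (ρ : ℝ) : ℝ :=
  if ρ = 0 then 1
  else (3 / (2 * ρ ^ 3)) * (2 * ρ - 3 + 4 * Real.exp (-ρ) - Real.exp (-2 * ρ))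

noncomputable def phi (ρ : ℝ) : ℝ :=
  4 * Phi2 ρ * Phi1 (2 * ρ) - 3 * (Phi1 ρ) ^ 4

/-! With `x = exp (-ρ)` and `ρ ≠ 0`, all three functions are rational in `ρ` and `x`
(using `exp (-2ρ) = x²`), and the identity becomes a polynomial identity once the
denominators are cleared. At `ρ = 0` both sides equal `1`. -/

open Real

lemma exp_neg_two_mul (ρ : ℝ) : exp (-(2 * ρ)) = exp (-ρ) ^ 2 := by
  rw [← exp_nat_mul]
  ring_nf

lemma Phi1_of_ne_zero {ρ : ℝ} (hρ : ρ ≠ 0) : Phi1 ρ = (1 - exp (-ρ)) / ρ :=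
  if_neg hρ

lemma Phi1_two_mul_of_ne_zero {ρ : ℝ} (hρ : ρ ≠ 0) :
    Phi1 (2 * ρ) = (1 - exp (-ρ) ^ 2) / (2 * ρ) := by
  rw [Phi1_of_ne_zero (mul_ne_zero two_ne_zero hρ), exp_neg_two_mul]

lemma Phi2_of_ne_zero {ρ : ℝ} (hρ : ρ ≠ 0) :
    Phi2 ρ = 3 / (2 * ρ ^ 3) * (2 * ρ - 3 + 4 * exp (-ρ) - exp (-ρ) ^ 2) := by
  rw [Phi2, if_neg hρ, neg_mul, exp_neg_two_mul]

lemma langevin_identity_of_ne_zero {ρ : ℝ} (hρ : ρ ≠ 0) (x : ℝ) :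
    ρ ^ 2 / 12 * (4 * (3 / (2 * ρ ^ 3) * (2 * ρ - 3 + 4 * x - x ^ 2)) * ((1 - x ^ 2) / (2 * ρ))
        - 3 * ((1 - x) / ρ) ^ 4) + ((1 - x) / ρ) ^ 2 = (1 - x ^ 2) / (2 * ρ) := by
  field_simp
  ring

theorem stmt_1 (ρ : ℝ) : (ρ ^ 2 / 12) * phi ρ + (Phi1 ρ) ^ 2 = Phi1 (2 * ρ) := by
  rcases eq_or_ne ρ 0 with rfl | hρ
  · simp [phi, Phi1]
  · rw [phi, Phi2_of_ne_zero hρ, Phi1_two_mul_of_ne_zero hρ, Phi1_of_ne_zero hρ]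
    exact langevin_identity_of_ne_zero hρ _
end

section
/- Let t > 0, γ ∈ ℝ, σ > 0 and δq, δp ∈ ℝ^d. Then, with c_qq = (σ²t³/3)Φ₂(γt), c_qp = (σ²t²/2)Φ₁(γt)², c_pp = σ²t·Φ₁(2γt), and D = (σ⁴t⁴/12)φ(γt), one has (1/D)·(c_pp|δq|² − 2c_qp (δq · δp) + c_qq|δp|²) = (1/(σ²t))·|γδq + δp|² + (12/(σ²t³φ(γt)))·|Φ₁(γt)δq − (t/2)Φ₃(γt)δp|². -/
noncomputable def Phi3 (ρ : ℝ) : ℝ :=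
  if ρ = 0 then 1 else 2 * (1 - Phi1 ρ) / ρ

/-!
Comparing the coefficients of `‖δq‖²`, `⟪δq, δp⟫` and `‖δp‖²` reduces the identity to three
scalar identities between the `Φᵢ` at `ρ = γt` (`Phi1_two_mul`, `mul_phi_eq`, `Phi2_eq`), each a
rational identity in `ρ` and `e^{-ρ}`. Dividing by `φ(γt)` needs `φ > 0`: for `ρ ≠ 0`,
`φ(ρ) = 6 (1 - e^{-ρ}) (ρ (1 + e^{-ρ}) - 2 (1 - e^{-ρ})) / ρ⁴`, and both factors have the sign
of `ρ`, the second because `tanh (x/2) < x/2` for `x > 0`.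
-/

open Real

lemma two_mul_one_sub_exp_neg_lt {x : ℝ} (hx : 0 < x) :
    2 * (1 - exp (-x)) < x * (1 + exp (-x)) := by
  let g : ℝ → ℝ := fun y ↦ y * (1 + exp (-y)) - 2 * (1 - exp (-y))
  have hg : ∀ y, HasDerivAt g (1 - (1 + y) * exp (-y)) y := fun y ↦ by
    have := ((hasDerivAt_id' y).mul ((hasDerivAt_neg y).exp.const_add 1)).sub
      (((hasDerivAt_neg y).exp.const_sub 1).const_mul 2)
    exact this.congr_deriv (by ring)
  have hmono : StrictMonoOn g (Set.Ici 0) := by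
    refine strictMonoOn_of_deriv_pos (convex_Ici 0)
      (fun y _ ↦ (hg y).continuousAt.continuousWithinAt) ?_
    intro y hy
    rw [interior_Ici, Set.mem_Ioi] at hy
    rw [(hg y).deriv, sub_pos, exp_neg, ← div_eq_mul_inv, div_lt_one (exp_pos y)]
    linarith [add_one_lt_exp hy.ne']
  have := hmono Set.self_mem_Ici hx.le hx
  simp only [g, neg_zero, exp_zero] at this
  linarith

lemma one_sub_exp_neg_mul_pos {ρ : ℝ} (hρ : ρ ≠ 0) :
    0 < (1 - exp (-ρ)) * (ρ * (1 + exp (-ρ)) - 2 * (1 - exp (-ρ))) := by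
  rcases hρ.lt_or_gt with hneg | hpos
  · have hlt := two_mul_one_sub_exp_neg_lt (neg_pos.mpr hneg)
    rw [neg_neg] at hlt
    have hexp : exp (-ρ) * exp ρ = 1 := by rw [← exp_add, neg_add_cancel, exp_zero]
    have h1 : 1 < exp (-ρ) := one_lt_exp_iff.mpr (by linarith)
    refine mul_pos_of_neg_of_neg (by linarith) ?_
    nlinarith [mul_lt_mul_of_pos_left hlt (exp_pos (-ρ))]
  · have h1 : exp (-ρ) < 1 := exp_lt_one_iff.mpr (by linarith)
    exact mul_pos (by linarith) (by linarith [two_mul_one_sub_exp_neg_lt hpos])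

lemma Phi3_of_ne_zero {ρ : ℝ} (hρ : ρ ≠ 0) :
    Phi3 ρ = 2 * (1 - (1 - exp (-ρ)) / ρ) / ρ := by
  rw [Phi3, Phi1, if_neg hρ, if_neg hρ]

lemma phi_eq_of_ne_zero {ρ : ℝ} (hρ : ρ ≠ 0) :
    phi ρ = 6 * ((1 - exp (-ρ)) * (ρ * (1 + exp (-ρ)) - 2 * (1 - exp (-ρ)))) / ρ ^ 4 := by
  rw [phi, Phi2_of_ne_zero hρ, Phi1_two_mul_of_ne_zero hρ, Phi1, if_neg hρ]
  field_simp
  ring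

lemma Phi2_eq (ρ : ℝ) : Phi2 ρ = (phi ρ + 3 * Phi3 ρ ^ 2) / 4 := by
  rcases eq_or_ne ρ 0 with rfl | hρ
  · norm_num [phi, Phi1, Phi2, Phi3]
  rw [phi_eq_of_ne_zero hρ, Phi3_of_ne_zero hρ, Phi2_of_ne_zero hρ]
  field_simp
  ring

lemma mul_phi_eq (ρ : ℝ) : ρ * phi ρ = 6 * Phi1 ρ * (Phi3 ρ - Phi1 ρ) := by
  rcases eq_or_ne ρ 0 with rfl | hρ
  · norm_num [Phi1, Phi3]
  rw [phi_eq_of_ne_zero hρ, Phi3_of_ne_zero hρ, Phi1, if_neg hρ]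
  field_simp
  ring

lemma Phi1_two_mul (ρ : ℝ) : Phi1 (2 * ρ) = Phi1 ρ ^ 2 + ρ ^ 2 * phi ρ / 12 := by
  rcases eq_or_ne ρ 0 with rfl | hρ
  · norm_num [Phi1]
  rw [phi_eq_of_ne_zero hρ, Phi1_two_mul_of_ne_zero hρ, Phi1, if_neg hρ]
  field_simp
  ring

lemma phi_pos (ρ : ℝ) : 0 < phi ρ := by
  rcases eq_or_ne ρ 0 with rfl | hρ
  · norm_num [phi, Phi1, Phi2]
  rw [phi_eq_of_ne_zero hρ]
  have := one_sub_exp_neg_mul_pos hρ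
  positivity

lemma norm_smul_add_smul_sq {E : Type*} [NormedAddCommGroup E] [InnerProductSpace ℝ E]
    (a b : ℝ) (x y : E) :
    ‖a • x + b • y‖ ^ 2 = a ^ 2 * ‖x‖ ^ 2 + 2 * (a * b) * inner ℝ x y + b ^ 2 * ‖y‖ ^ 2 := by
  rw [norm_add_sq_real, real_inner_smul_left, real_inner_smul_right, norm_smul, norm_smul,
    norm_eq_abs, norm_eq_abs, mul_pow, mul_pow, sq_abs, sq_abs]
  ring

lemma norm_smul_sub_smul_sq {E : Type*} [NormedAddCommGroup E] [InnerProductSpace ℝ E]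
    (a b : ℝ) (x y : E) :
    ‖a • x - b • y‖ ^ 2 = a ^ 2 * ‖x‖ ^ 2 - 2 * (a * b) * inner ℝ x y + b ^ 2 * ‖y‖ ^ 2 := by
  rw [sub_eq_add_neg, ← neg_smul, norm_smul_add_smul_sq]
  ring

theorem stmt_8 {d : ℕ} (t γ σ : ℝ) (ht : 0 < t) (hσ : 0 < σ)
    (δq δp : EuclideanSpace ℝ (Fin d)) :
    (1 / (σ ^ 4 * t ^ 4 / 12 * phi (γ * t))) *
      ((σ ^ 2 * t * Phi1 (2 * (γ * t))) * ‖δq‖ ^ 2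
        - 2 * (σ ^ 2 * t ^ 2 / 2 * (Phi1 (γ * t)) ^ 2) * (inner ℝ δq δp : ℝ)
        + (σ ^ 2 * t ^ 3 / 3 * Phi2 (γ * t)) * ‖δp‖ ^ 2)
    = (1 / (σ ^ 2 * t)) * ‖γ • δq + δp‖ ^ 2
      + (12 / (σ ^ 2 * t ^ 3 * phi (γ * t))) *
          ‖Phi1 (γ * t) • δq - ((t / 2) * Phi3 (γ * t)) • δp‖ ^ 2 := by
  have hsum : ‖γ • δq + δp‖ ^ 2 = γ ^ 2 * ‖δq‖ ^ 2 + 2 * γ * inner ℝ δq δp + ‖δp‖ ^ 2 := by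
    simpa using norm_smul_add_smul_sq γ 1 δq δp
  rw [hsum, norm_smul_sub_smul_sq]
  -- otherwise `field_simp` rewrites `γ * t` to `t * γ` and no longer recognises `phi (γ * t) ≠ 0`
  generalize hρ : γ * t = ρ
  have hφ : phi ρ ≠ 0 := (phi_pos ρ).ne'
  rw [Phi1_two_mul, Phi2_eq]
  field_simp
  subst hρ
  linear_combination (-96 * t * inner ℝ δq δp) * mul_phi_eq (γ * t)
end
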